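/- Let γ_0(t) be an admissible curve and let γ_1(t) = f(γ_0(t)) = (ξ(t), η_1(t)). Suppose that for some t we have η̇_1(t) ≠ 0 and |ξ̇(t)/η̇_1(t)| < 1. Then the curvature of γ_1 at that point satisfies |κ_1(t)| > a/b ≫ 1. -/

import Mathlib

noncomputable section

open Set Filter Topology Function MeasureTheory Bornology

/-- Points of the plane. -/
abbrev Pt : Type := ℝ × ℝ

/-- The Euclidean norm of a vector of the plane. -/
def enorm2 (v : Pt) : ℝ := Real.sqrt (v.1 ^ 2 + v.2 ^ 2)

/-- The Euclidean distance between two points of the plane. -/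
def edist2 (z w : Pt) : ℝ := enorm2 (z - w)

/-- The Hénon map with parameters `a` and `b`. -/
def henon (a b : ℝ) (z : Pt) : Pt := (1 - a * z.1 ^ 2 + z.2, b * z.1)

/-- `f` is a Hénon-like map with parameters `a`, `b`: a `C²` plane diffeomorphism which is
an `η`-perturbation of the Hénon map `h_{a,b}` in the `C²` norm. -/
structure IsHenonLike (f : Pt → Pt) (a b η : ℝ) : Prop where
  bijective : Function.Bijective f
  contDiff : ContDiff ℝ 2 f
  pert0 : ∀ z, ‖f z - henon a b z‖ ≤ η
  pert1 : ∀ z, ‖fderiv ℝ (fun w => f w - henon a b w) z‖ ≤ η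
  pert2 : ∀ z, ‖fderiv ℝ (fderiv ℝ (fun w => f w - henon a b w)) z‖ ≤ η

/-- `f` is a Hénon-like family with parameter `b`: each `f a` is a plane diffeomorphism
and `(x,y,a) ↦ (f a)(x,y) - h_{a,b}(x,y)` is a `C²` perturbation of size at most `η` in
the `C²(x,y,a)` norm. -/
structure IsHenonLikeFamily (f : ℝ → Pt → Pt) (b η : ℝ) : Prop where
  bijective : ∀ a, Function.Bijective (f a)
  contDiff : ContDiff ℝ 2 fun w : ℝ × Pt => f w.1 w.2
  pert0 : ∀ w : ℝ × Pt, ‖f w.1 w.2 - henon w.1 b w.2‖ ≤ η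
  pert1 : ∀ w : ℝ × Pt, ‖fderiv ℝ (fun u : ℝ × Pt => f u.1 u.2 - henon u.1 b u.2) w‖ ≤ η
  pert2 : ∀ w : ℝ × Pt,
    ‖fderiv ℝ (fderiv ℝ (fun u : ℝ × Pt => f u.1 u.2 - henon u.1 b u.2)) w‖ ≤ η

/-- The nonwandering set of `f`. -/
def nonwanderingSet (f : Pt → Pt) : Set Pt :=
  {z | ∀ U ∈ 𝓝 z, ∃ n : ℕ, 1 ≤ n ∧ (f^[n] '' U ∩ U).Nonempty}

/-- The stable set `W^s(p)` of a fixed point `p` of `f`. -/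
def stableSet (f : Pt → Pt) (p : Pt) : Set Pt :=
  {z | Tendsto (fun n => f^[n] z) atTop (𝓝 p)}

/-- The unstable set `W^u(p)` of a fixed point `p` of `f` (via the inverse map). -/
def unstableSet (f : Pt → Pt) (p : Pt) : Set Pt :=
  {z | Tendsto (fun n => (Function.invFun f)^[n] z) atTop (𝓝 p)}

/-- `v` is a (nonzero) tangent vector to the set `W` at the point `z`: there is a curve
through `z` contained in `W` with velocity `v` at `z`. -/
def TangentVec (W : Set Pt) (z v : Pt) : Prop :=
  v ≠ 0 ∧ ∃ γ : ℝ → Pt, γ 0 = z ∧ (∀ t, γ t ∈ W) ∧ HasDerivAt γ v 0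

/-- `D` is a closed topological disc bounded by arcs of `W^u(p)` and `W^s(q)`. -/
def IsBoundingDisc (f : Pt → Pt) (p q : Pt) (D : Set Pt) : Prop :=
  IsCompact D ∧ Nonempty (↥D ≃ₜ ↥(Metric.closedBall (0 : Pt) 1)) ∧
    frontier D ⊆ unstableSet f p ∪ stableSet f q

/-- `p` and `q` are the hyperbolic fixed points of `f`, the continuations of the fixed
points `p* = (1/2, 0)` and `q* = (-1, 0)` of `h_{2,0}`. -/
def AreContinuationFixedPoints (f : Pt → Pt) (p q : Pt) : Prop :=
  f p = p ∧ f q = q ∧ edist2 p (1 / 2, 0) ≤ 1 / 10 ∧ edist2 q (-1, 0) ≤ 1 / 10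

/-- The ball `Q` of radius `δ = 1/10` around `q* = (-1, 0)` (Euclidean distance). -/
def Qball : Set Pt := {z | edist2 z (-1, 0) < 1 / 10}

/-- `V`: the connected component of `f⁻¹(Q)` containing `(1, 0)` (not meeting `Q`). -/
def Vcomp (f : Pt → Pt) : Set Pt := connectedComponentIn (f ⁻¹' Qball) (1, 0)

/-- `Q_n = ⋂_{i=0}^n f^{-i}(Q)`. -/
def Qn (f : Pt → Pt) (n : ℕ) : Set Pt := ⋂ i ∈ Finset.range (n + 1), f^[i] ⁻¹' Qball

/-- `V_n = f⁻¹(Q_n) ∩ V`. -/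
def Vn (f : Pt → Pt) (n : ℕ) : Set Pt := f ⁻¹' Qn f n ∩ Vcomp f

/-- `W^s_δ(q)`: the connected component containing `q` of `W^s(q) ∩ Q`. -/
def WsLoc (f : Pt → Pt) (q : Pt) : Set Pt := connectedComponentIn (stableSet f q ∩ Qball) q

/-- A vector is almost horizontal if its slope is less than `α = 1/2`. -/
def AlmostHorizontal (v : Pt) : Prop := |v.2| < (1 / 2) * |v.1|

/-- The curvature of a parametrized plane curve. -/
def curvature2 (γ : ℝ → Pt) (s : ℝ) : ℝ :=
  |(deriv γ s).1 * (deriv (deriv γ) s).2 - (deriv γ s).2 * (deriv (deriv γ) s).1| /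
    enorm2 (deriv γ s) ^ 3

/-- The critical neighbourhood `Δ_ε = (-ε, ε) × (-4b, 4b)`. -/
def critNbhd (b ε : ℝ) : Set Pt := Ioo (-ε) ε ×ˢ Ioo (-(4 * |b|)) (4 * |b|)

/-- `Δ = {z ∈ Δ_ε : f(z) ∉ D}`. -/
def DeltaSet (f : Pt → Pt) (D : Set Pt) (b ε : ℝ) : Set Pt :=
  {z ∈ critNbhd b ε | f z ∉ D}

/-- The maximal expansion (Euclidean operator norm) of a linear map of the plane. -/
def eopNorm (A : Pt →L[ℝ] Pt) : ℝ := ⨆ v : {v : Pt // enorm2 v = 1}, enorm2 (A ↑v)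

/-- The minimal expansion `‖A⁻¹‖⁻¹` of a linear map of the plane. -/
def eConorm (A : Pt →L[ℝ] Pt) : ℝ := ⨅ v : {v : Pt // enorm2 v = 1}, enorm2 (A ↑v)

/-- The orbit of `z` is unbounded either in forward or in backward time. -/
def EscapesForwardOrBackward (f : Pt → Pt) (z : Pt) : Prop :=
  ¬ IsBounded (Set.range fun n : ℕ => f^[n] z) ∨
    ¬ IsBounded (Set.range fun n : ℕ => (Function.invFun f)^[n] z)

/-- The compact invariant set `Λ` is uniformly hyperbolic for `f` with constants
`Cs, Cu > 0` and exponents `lams < 0 < lamu`: there is a continuous `Df`-invariant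
splitting with uniform contraction/expansion estimates. -/
def UniformlyHyperbolicWith (f : Pt → Pt) (Λ : Set Pt) (Cs Cu lams lamu : ℝ) : Prop :=
  IsCompact Λ ∧ f '' Λ = Λ ∧
    ∃ es eu : Pt → Pt,
      ContinuousOn es Λ ∧ ContinuousOn eu Λ ∧
      (∀ z ∈ Λ, LinearIndependent ℝ ![es z, eu z]) ∧
      (∀ z ∈ Λ, ∃ c : ℝ, fderiv ℝ f z (es z) = c • es (f z)) ∧
      (∀ z ∈ Λ, ∃ c : ℝ, fderiv ℝ f z (eu z) = c • eu (f z)) ∧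
      (∀ z ∈ Λ, ∀ n : ℕ, 1 ≤ n →
        enorm2 (fderiv ℝ (f^[n]) z (es z)) ≤ Cs * Real.exp (lams * n) * enorm2 (es z)) ∧
      (∀ z ∈ Λ, ∀ n : ℕ, 1 ≤ n →
        Cu * Real.exp (lamu * n) * enorm2 (eu z) ≤ enorm2 (fderiv ℝ (f^[n]) z (eu z)))

/-- There is a tangency at `z` between the stable manifold of `P` and the unstable
manifold of `Q`. -/
def HeteroclinicTangencyAt (f : Pt → Pt) (P Q z : Pt) : Prop :=
  ∃ v : Pt, TangentVec (stableSet f P) z v ∧ TangentVec (unstableSet f Q) z v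

/-- The stable manifold of `P` and the unstable manifold of `Q` intersect transversally
somewhere. -/
def TransversalIntersection (f : Pt → Pt) (P Q : Pt) : Prop :=
  ∃ z v w : Pt, TangentVec (stableSet f P) z v ∧ TangentVec (unstableSet f Q) z w ∧
    LinearIndependent ℝ ![v, w]

/-- The unstable manifold of `P` crosses the stable manifold of `P` (at least) four
times. -/
def CrossesFourTimes (f : Pt → Pt) (P : Pt) : Prop :=
  ∃ S : Finset Pt, S.card = 4 ∧ ↑S ⊆ unstableSet f P ∩ stableSet f P

/-- The bifurcation parameter `a*`: the infimum of the parameters for which the stable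
and unstable manifolds of the fixed points intersect transversally (`W^s(p)` and
`W^u(q)` in the orientation-reversing case `b > 0`; `W^s(q)` and `W^u(q)` in the
orientation-preserving case `b < 0`). -/
def aStar (f : ℝ → Pt → Pt) (p q : ℝ → Pt) (b : ℝ) : ℝ :=
  sInf {a | if 0 < b then TransversalIntersection (f a) (p a) (q a)
            else TransversalIntersection (f a) (q a) (q a)}

/-- The parameter `â`: the infimum of the parameters for which `W^u(p)` crosses
`W^s(p)` four times (`b > 0`), resp. `W^u(q)` crosses `W^s(q)` four times (`b < 0`). -/
def aHat (f : ℝ → Pt → Pt) (p q : ℝ → Pt) (b : ℝ) : ℝ :=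
  sInf {a | if 0 < b then CrossesFourTimes (f a) (p a) else CrossesFourTimes (f a) (q a)}

def V1 : Set Pt := {z | z.1 ≤ -2 ∧ z.2 ≤ |z.1|}
def V2 : Set Pt := {z | z.1 ≤ 2 ∧ z.2 ≤ -4}
def V3 : Set Pt := {z | 2 ≤ z.1 ∧ z.2 ≤ 2}
def V4 : Set Pt := {z | -2 ≤ z.1 ∧ 2 ≤ z.2}
def V5 : Set Pt := {z | z.1 ≤ -2 ∧ |z.1| ≤ z.2}
def V6 (b : ℝ) : Set Pt := {z | |z.1| ≤ 2 ∧ 4 * b ≤ z.2}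

/-- `C^+_N`: the maximal expansion of `Df^j` over `z ∈ D` and `1 ≤ j ≤ N`. -/
def Cplus (f : Pt → Pt) (D : Set Pt) (N : ℕ) : ℝ :=
  sSup {r | ∃ z ∈ D, ∃ j : ℕ, 1 ≤ j ∧ j ≤ N ∧ r = eopNorm (fderiv ℝ (f^[j]) z)}

/-- `C^-_N`: the minimal contraction `‖(Df^j)⁻¹‖⁻¹` over `z ∈ D` and `1 ≤ j ≤ N`. -/
def Cminus (f : Pt → Pt) (D : Set Pt) (N : ℕ) : ℝ :=
  sInf {r | ∃ z ∈ D, ∃ j : ℕ, 1 ≤ j ∧ j ≤ N ∧ r = eConorm (fderiv ℝ (f^[j]) z)}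

/-!
Write `A = Df(γ t)`, `B = D²f(γ t)`, `v = γ'(t)`, `w = γ''(t)`. The numerator of the curvature
of `f ∘ γ` is `cross2 (Av) (Bvv + Aw) = det A · cross2 v w + 2a v₁² (Av)₂ + O(η |Av| |v|²)`, the
middle term coming from the quadratic part of the Hénon map. At a fold `Av` is almost vertical,
so `|Av| ≈ |(Av)₂| ≈ |b| |v₁|`; this also forces `|2ax| ≤ 1`, whence `|det A| ≲ |b|`, while
admissibility gives `|cross2 v w| ≲ |v₁|³`. So the middle term dominates: the numerator is
`≳ |b| |v₁|³`, the cube of the speed is `≲ |b|³ |v₁|³`, and the curvature is `≳ 1/b² ≫ a/|b|`.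
-/

def cross2 (u w : Pt) : ℝ := u.1 * w.2 - u.2 * w.1

theorem det_eq_cross2 (A : Pt →L[ℝ] Pt) :
    LinearMap.det (A : Pt →ₗ[ℝ] Pt) = cross2 (A (1, 0)) (A (0, 1)) := by
  rw [← LinearMap.det_toMatrix (Module.Basis.finTwoProd ℝ), Matrix.det_fin_two]
  simp only [LinearMap.toMatrix_apply, Module.Basis.finTwoProd_zero, Module.Basis.finTwoProd_one,
    Module.Basis.coe_finTwoProd_repr, ContinuousLinearMap.coe_coe, Matrix.cons_val_zero,
    Matrix.cons_val_one, Matrix.cons_val_fin_one, cross2]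
  ring

theorem cross2_map_map (A : Pt →L[ℝ] Pt) (u w : Pt) :
    cross2 (A u) (A w) = LinearMap.det (A : Pt →ₗ[ℝ] Pt) * cross2 u w := by
  have key : ∀ p : Pt, A p = p.1 • A (1, 0) + p.2 • A (0, 1) := fun p => by
    rw [← A.map_smul, ← A.map_smul, ← A.map_add]; congr 1; ext <;> simp
  rw [det_eq_cross2, key u, key w]
  simp only [cross2, Prod.fst_add, Prod.snd_add, Prod.smul_fst, Prod.smul_snd, smul_eq_mul]
  ring

theorem abs_cross2_le (u w : Pt) : |cross2 u w| ≤ 2 * ‖u‖ * ‖w‖ := by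
  have h1 : |u.1| ≤ ‖u‖ := norm_fst_le u
  have h2 : |u.2| ≤ ‖u‖ := norm_snd_le u
  have h3 : |w.1| ≤ ‖w‖ := norm_fst_le w
  have h4 : |w.2| ≤ ‖w‖ := norm_snd_le w
  calc |cross2 u w| ≤ |u.1| * |w.2| + |u.2| * |w.1| := by
        rw [cross2, ← abs_mul, ← abs_mul]; exact abs_sub _ _
    _ ≤ ‖u‖ * ‖w‖ + ‖u‖ * ‖w‖ := by gcongr
    _ = 2 * ‖u‖ * ‖w‖ := by ring

theorem norm_le_enorm2 (u : Pt) : ‖u‖ ≤ enorm2 u :=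
  norm_prod_le_iff.2
    ⟨Real.le_sqrt_of_sq_le (by rw [Real.norm_eq_abs, sq_abs]; linarith [sq_nonneg u.2]),
      Real.le_sqrt_of_sq_le (by rw [Real.norm_eq_abs, sq_abs]; linarith [sq_nonneg u.1])⟩

theorem enorm2_le_norm (u : Pt) : enorm2 u ≤ 3 / 2 * ‖u‖ := by
  have h1 : |u.1| ≤ ‖u‖ := norm_fst_le u
  have h2 : |u.2| ≤ ‖u‖ := norm_snd_le u
  refine Real.sqrt_le_iff.2 ⟨by positivity, ?_⟩
  nlinarith [sq_abs u.1, sq_abs u.2, abs_nonneg u.1, abs_nonneg u.2]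

theorem AlmostHorizontal.norm_eq {v : Pt} (hv : AlmostHorizontal v) : ‖v‖ = |v.1| := by
  rw [Prod.norm_def, Real.norm_eq_abs, Real.norm_eq_abs, max_eq_left]
  unfold AlmostHorizontal at hv; linarith [abs_nonneg v.1]

theorem AlmostHorizontal.abs_fst_pos {v : Pt} (hv : AlmostHorizontal v) : 0 < |v.1| := by
  unfold AlmostHorizontal at hv; linarith [abs_nonneg v.2]

theorem AlmostHorizontal.enorm2_le {v : Pt} (hv : AlmostHorizontal v) :
    enorm2 v ≤ 9 / 8 * |v.1| := by
  unfold AlmostHorizontal at hv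
  refine Real.sqrt_le_iff.2 ⟨by positivity, ?_⟩
  nlinarith [sq_abs v.1, sq_abs v.2, abs_nonneg v.2]

theorem norm_eq_abs_snd_of_abs_fst_lt {u : Pt} (h : |u.1| < |u.2|) : ‖u‖ = |u.2| := by
  rw [Prod.norm_def, Real.norm_eq_abs, Real.norm_eq_abs, max_eq_right h.le]

open ContinuousLinearMap in
/-- Written as an affine function of `z`, so that its own derivative is read off directly. -/
def henonFDeriv (a b : ℝ) (z : Pt) : Pt →L[ℝ] Pt :=
  (snd ℝ ℝ ℝ).prod (b • fst ℝ ℝ ℝ) + z.1 • (fst ℝ ℝ ℝ).smulRight ((-(2 * a), 0) : Pt)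

open ContinuousLinearMap in
def henonFDeriv2 (a : ℝ) : Pt →L[ℝ] Pt →L[ℝ] Pt :=
  (fst ℝ ℝ ℝ).smulRight ((fst ℝ ℝ ℝ).smulRight ((-(2 * a), 0) : Pt))

@[simp]
theorem henonFDeriv_apply (a b : ℝ) (z v : Pt) :
    henonFDeriv a b z v = (v.2 - 2 * a * z.1 * v.1, b * v.1) := by
  simp only [henonFDeriv, add_apply, ContinuousLinearMap.prod_apply, ContinuousLinearMap.coe_snd',
    ContinuousLinearMap.coe_fst', smul_apply, smul_eq_mul, ContinuousLinearMap.smulRight_apply,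
    Prod.smul_mk, Prod.mk_add_mk, mul_zero, add_zero, Prod.mk.injEq, and_true]
  ring

@[simp]
theorem henonFDeriv2_apply (a : ℝ) (v w : Pt) :
    henonFDeriv2 a v w = (-(2 * a) * v.1 * w.1, 0) := by
  simp only [henonFDeriv2, ContinuousLinearMap.smulRight_apply, ContinuousLinearMap.coe_fst',
    smul_apply, Prod.smul_mk, smul_eq_mul, mul_zero, Prod.mk.injEq, and_true]
  ring

open ContinuousLinearMap in
theorem hasFDerivAt_henon (a b : ℝ) (z : Pt) :
    HasFDerivAt (henon a b) (henonFDeriv a b z) z := by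
  have hx : HasFDerivAt (fun w : Pt => w.1) (fst ℝ ℝ ℝ) z := hasFDerivAt_fst
  have hy : HasFDerivAt (fun w : Pt => w.2) (snd ℝ ℝ ℝ) z := hasFDerivAt_snd
  have h := ((((hx.pow 2).const_mul a).const_sub 1).fun_add hy).prodMk (hx.const_mul b)
  refine h.congr_fderiv (ContinuousLinearMap.ext fun v => ?_)
  simp only [nsmul_eq_mul, ContinuousLinearMap.prod_apply, add_apply, neg_apply, smul_apply,
    coe_fst', coe_snd', smul_eq_mul, henonFDeriv_apply, Prod.mk.injEq, and_true]
  ring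

theorem hasFDerivAt_henonFDeriv (a b : ℝ) (z : Pt) :
    HasFDerivAt (henonFDeriv a b) (henonFDeriv2 a) z :=
  (hasFDerivAt_fst.smul_const _).const_add _

theorem fderiv_sub_henon {f : Pt → Pt} (hf : Differentiable ℝ f) (a b : ℝ) :
    fderiv ℝ (fun w => f w - henon a b w) = fun w => fderiv ℝ f w - henonFDeriv a b w :=
  funext fun w => by
    rw [fderiv_fun_sub (hf w) (hasFDerivAt_henon a b w).differentiableAt,
      (hasFDerivAt_henon a b w).fderiv]

namespace IsHenonLike

variable {f : Pt → Pt} {a b η : ℝ}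

theorem norm_fderiv_sub_henonFDeriv_le (hf : IsHenonLike f a b η) (z : Pt) :
    ‖fderiv ℝ f z - henonFDeriv a b z‖ ≤ η := by
  simpa only [fderiv_sub_henon (hf.contDiff.differentiable two_ne_zero)] using hf.pert1 z

theorem norm_fderiv_fderiv_sub_henonFDeriv2_le (hf : IsHenonLike f a b η) (z : Pt) :
    ‖fderiv ℝ (fderiv ℝ f) z - henonFDeriv2 a‖ ≤ η := by
  have hDf : Differentiable ℝ (fderiv ℝ f) :=
    (hf.contDiff.fderiv_right (m := 1) le_rfl).differentiable one_ne_zero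
  have h := hf.pert2 z
  rwa [fderiv_sub_henon (hf.contDiff.differentiable two_ne_zero),
    fderiv_fun_sub (hDf z) (hasFDerivAt_henonFDeriv a b z).differentiableAt,
    (hasFDerivAt_henonFDeriv a b z).fderiv] at h

end IsHenonLike

section CurveComp

variable {E F : Type*} [NormedAddCommGroup E] [NormedSpace ℝ E] [NormedAddCommGroup F]
  [NormedSpace ℝ F] {f : E → F} {γ : ℝ → E}

theorem deriv_comp_curve (hf : Differentiable ℝ f) (hγ : Differentiable ℝ γ) :
    deriv (f ∘ γ) = fun t => fderiv ℝ f (γ t) (deriv γ t) :=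
  funext fun t => fderiv_comp_deriv t (hf (γ t)) (hγ t)

theorem deriv_deriv_comp_curve (hf : ContDiff ℝ 2 f) (hγ : ContDiff ℝ 2 γ) (t : ℝ) :
    deriv (deriv (f ∘ γ)) t =
      fderiv ℝ (fderiv ℝ f) (γ t) (deriv γ t) (deriv γ t)
        + fderiv ℝ f (γ t) (deriv (deriv γ) t) := by
  have hDf : Differentiable ℝ (fderiv ℝ f) :=
    (hf.fderiv_right (m := 1) le_rfl).differentiable one_ne_zero
  have hγ1 : Differentiable ℝ γ := hγ.differentiable two_ne_zero
  have hγ2 : Differentiable ℝ (deriv γ) := (hγ.deriv' (n := 1)).differentiable one_ne_zero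
  rw [deriv_comp_curve (hf.differentiable two_ne_zero) hγ1]
  exact (((hDf (γ t)).hasFDerivAt.comp_hasDerivAt t (hγ1 t).hasDerivAt).clm_apply
    (hγ2 t).hasDerivAt).deriv

end CurveComp

theorem curvature2_eq (γ : ℝ → Pt) (s : ℝ) :
    curvature2 γ s = |cross2 (deriv γ s) (deriv (deriv γ) s)| / enorm2 (deriv γ s) ^ 3 :=
  rfl

theorem cross2_apply_add_eq (a : ℝ) (A : Pt →L[ℝ] Pt) (B : Pt →L[ℝ] Pt →L[ℝ] Pt)
    (v w : Pt) :
    cross2 (A v) (B v v + A w) = LinearMap.det (A : Pt →ₗ[ℝ] Pt) * cross2 v w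
      + 2 * a * v.1 ^ 2 * (A v).2 + cross2 (A v) ((B - henonFDeriv2 a) v v) := by
  rw [← cross2_map_map]
  simp only [cross2, sub_apply, henonFDeriv2_apply, Prod.fst_add, Prod.snd_add, Prod.fst_sub,
    Prod.snd_sub]
  ring

section Fold

variable {a b η : ℝ} {z v w : Pt} {A : Pt →L[ℝ] Pt} {B : Pt →L[ℝ] Pt →L[ℝ] Pt}

theorem abs_apply_sub_henonFDeriv_le (hA : ‖A - henonFDeriv a b z‖ ≤ η) (u : Pt) :
    |(A u).1 - (u.2 - 2 * a * z.1 * u.1)| ≤ η * ‖u‖ ∧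
      |(A u).2 - b * u.1| ≤ η * ‖u‖ := by
  have h : ‖A u - henonFDeriv a b z u‖ ≤ η * ‖u‖ :=
    ((A - henonFDeriv a b z).le_opNorm u).trans (by gcongr)
  rw [henonFDeriv_apply] at h
  exact ⟨(norm_fst_le _).trans h, (norm_snd_le _).trans h⟩

theorem abs_det_le (hA : ‖A - henonFDeriv a b z‖ ≤ η) (hz : |2 * a * z.1| ≤ 1) :
    |LinearMap.det (A : Pt →ₗ[ℝ] Pt)| ≤ (1 + η) * (|b| + 2 * η) := by
  obtain ⟨h11, h21⟩ := abs_apply_sub_henonFDeriv_le hA (1, 0)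
  obtain ⟨h12, h22⟩ := abs_apply_sub_henonFDeriv_le hA (0, 1)
  simp only [Prod.norm_def, norm_one, norm_zero, max_eq_left (zero_le_one (α := ℝ)),
    max_eq_right (zero_le_one (α := ℝ)), mul_one, mul_zero, sub_zero, zero_sub] at h11 h21 h12 h22
  have hη : 0 ≤ η := (norm_nonneg _).trans hA
  have e11 : |(A (1, 0)).1| ≤ 1 + η := by
    have := abs_sub_abs_le_abs_sub (A (1, 0)).1 (-(2 * a * z.1))
    rw [abs_neg] at this; linarith
  have e21 : |(A (1, 0)).2| ≤ |b| + η := by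
    have := abs_sub_abs_le_abs_sub (A (1, 0)).2 b; linarith
  have e12 : |(A (0, 1)).1| ≤ 1 + η := by
    have := abs_sub_abs_le_abs_sub (A (0, 1)).1 1; rw [abs_one] at this; linarith
  rw [det_eq_cross2, cross2]
  calc |(A (1, 0)).1 * (A (0, 1)).2 - (A (1, 0)).2 * (A (0, 1)).1|
      ≤ |(A (1, 0)).1| * |(A (0, 1)).2| + |(A (1, 0)).2| * |(A (0, 1)).1| := by
        rw [← abs_mul, ← abs_mul]; exact abs_sub _ _
    _ ≤ (1 + η) * η + (|b| + η) * (1 + η) := by gcongr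
    _ = (1 + η) * (|b| + 2 * η) := by ring

theorem abs_snd_apply_mem_Icc (hA : ‖A - henonFDeriv a b z‖ ≤ η) (hv : AlmostHorizontal v) :
    |(A v).2| ∈ Set.Icc ((|b| - η) * |v.1|) ((|b| + η) * |v.1|) := by
  have h := (abs_apply_sub_henonFDeriv_le hA v).2
  rw [hv.norm_eq] at h
  have h1 := abs_sub_abs_le_abs_sub (A v).2 (b * v.1)
  have h2 := abs_sub_abs_le_abs_sub (b * v.1) (A v).2
  rw [abs_sub_comm, abs_mul] at h2
  rw [abs_mul] at h1
  constructor <;> nlinarith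

theorem abs_two_mul_fst_le_one_of_fold (hA : ‖A - henonFDeriv a b z‖ ≤ η)
    (hv : AlmostHorizontal v) (hfold : |(A v).1| < |(A v).2|) (hbη : |b| + 2 * η ≤ 1 / 2) :
    |2 * a * z.1| ≤ 1 := by
  have hX := hv.abs_fst_pos
  have h1 := (abs_apply_sub_henonFDeriv_le hA v).1
  have h2 := (abs_snd_apply_mem_Icc hA hv).2
  rw [hv.norm_eq] at h1
  have key := abs_add_three v.2 ((A v).1 - (v.2 - 2 * a * z.1 * v.1)) (-(A v).1)
  rw [abs_neg, show v.2 + ((A v).1 - (v.2 - 2 * a * z.1 * v.1)) + -(A v).1 = 2 * a * z.1 * v.1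
    by ring, abs_mul] at key
  unfold AlmostHorizontal at hv
  nlinarith

theorem abs_det_mul_cross2_le_of_fold (hb : |b| ≤ 1 / 100) (hη : 6 * η ≤ |b|)
    (hA : ‖A - henonFDeriv a b z‖ ≤ η) (hv : AlmostHorizontal v)
    (hw : |cross2 v w| / enorm2 v ^ 3 < 1 / 2) (hfold : |(A v).1| < |(A v).2|) :
    |LinearMap.det (A : Pt →ₗ[ℝ] Pt) * cross2 v w|
      ≤ 7 / 5 * |b| * (1 / 2 * (9 / 8 * |v.1|) ^ 3) := by
  have hη0 : 0 ≤ η := (norm_nonneg _).trans hA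
  have hdet : |LinearMap.det (A : Pt →ₗ[ℝ] Pt)| ≤ 7 / 5 * |b| := by
    have := abs_det_le hA (abs_two_mul_fst_le_one_of_fold hA hv hfold (by linarith))
    nlinarith
  have hvw : |cross2 v w| ≤ 1 / 2 * (9 / 8 * |v.1|) ^ 3 := by
    have hv0 : 0 < enorm2 v := hv.abs_fst_pos.trans_le (hv.norm_eq ▸ norm_le_enorm2 v)
    rw [div_lt_iff₀ (by positivity)] at hw
    have := pow_le_pow_left₀ hv0.le hv.enorm2_le 3
    linarith
  rw [abs_mul]
  gcongr

theorem abs_cross2_apply_sub_henonFDeriv2_le (hB : ‖B - henonFDeriv2 a‖ ≤ η)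
    (hv : AlmostHorizontal v) (hfold : |(A v).1| < |(A v).2|) :
    |cross2 (A v) ((B - henonFDeriv2 a) v v)| ≤ 2 * |(A v).2| * (η * |v.1| ^ 2) := by
  have hBvv : ‖(B - henonFDeriv2 a) v v‖ ≤ η * |v.1| ^ 2 :=
    calc _ ≤ ‖B - henonFDeriv2 a‖ * ‖v‖ * ‖v‖ := ContinuousLinearMap.le_opNorm₂ _ _ _
      _ ≤ η * |v.1| * |v.1| := by rw [hv.norm_eq]; gcongr
      _ = η * |v.1| ^ 2 := by ring
  calc _ ≤ 2 * ‖A v‖ * ‖(B - henonFDeriv2 a) v v‖ := abs_cross2_le _ _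
    _ ≤ _ := by rw [norm_eq_abs_snd_of_abs_fst_lt hfold]; gcongr

theorem abs_cross2_fold_ge (ha : 199 / 100 ≤ a) (hb : |b| ≤ 1 / 100) (hη : 6 * η ≤ |b|)
    (hA : ‖A - henonFDeriv a b z‖ ≤ η) (hB : ‖B - henonFDeriv2 a‖ ≤ η)
    (hv : AlmostHorizontal v) (hw : |cross2 v w| / enorm2 v ^ 3 < 1 / 2)
    (hfold : |(A v).1| < |(A v).2|) :
    2 * |b| * |v.1| ^ 3 ≤ |cross2 (A v) (B v v + A w)| := by
  have hD := abs_det_mul_cross2_le_of_fold hb hη hA hv hw hfold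
  have hQ := abs_cross2_apply_sub_henonFDeriv2_le hB hv hfold
  have hF : |2 * a * v.1 ^ 2 * (A v).2| = 2 * a * |v.1| ^ 2 * |(A v).2| := by
    rw [abs_mul, abs_of_nonneg (by nlinarith [sq_nonneg v.1]), sq_abs]
  have hm : 5 / 6 * |b| * |v.1| ≤ |(A v).2| := by
    nlinarith [(abs_snd_apply_mem_Icc hA hv).1, abs_nonneg v.1]
  have hmain : 2 * |v.1| ^ 2 * (5 / 6 * |b| * |v.1|) * (197 / 100)
      ≤ 2 * |v.1| ^ 2 * |(A v).2| * (a - η) := by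
    gcongr; linarith
  rw [cross2_apply_add_eq a]
  set D := LinearMap.det (A : Pt →ₗ[ℝ] Pt) * cross2 v w
  set F := 2 * a * v.1 ^ 2 * (A v).2
  set Q := cross2 (A v) ((B - henonFDeriv2 a) v v)
  have htri : |F| ≤ |D + F + Q| + |D| + |Q| := by
    have := abs_add_three (D + F + Q) (-D) (-Q)
    rwa [abs_neg, abs_neg, show D + F + Q + -D + -Q = F by ring] at this
  have : 0 ≤ |b| * |v.1| ^ 3 := by positivity
  linarith

theorem curvature_gt_of_fold (ha : |a - 2| ≤ 1 / 100) (hb0 : 0 < |b|) (hb : |b| ≤ 1 / 100)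
    (hη : 6 * η ≤ |b|) (hA : ‖A - henonFDeriv a b z‖ ≤ η) (hB : ‖B - henonFDeriv2 a‖ ≤ η)
    (hv : AlmostHorizontal v) (hw : |cross2 v w| / enorm2 v ^ 3 < 1 / 2)
    (hfold : |(A v).1| < |(A v).2|) :
    a / |b| < |cross2 (A v) (B v v + A w)| / enorm2 (A v) ^ 3 := by
  have hN := abs_cross2_fold_ge (by linarith [(abs_le.1 ha).1]) hb hη hA hB hv hw hfold
  set X := |v.1|
  have hX : 0 < X := hv.abs_fst_pos
  have hη0 : 0 ≤ η := (norm_nonneg _).trans hA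
  obtain ⟨hm, hm'⟩ := abs_snd_apply_mem_Icc hA hv
  have hAv : ‖A v‖ = |(A v).2| := norm_eq_abs_snd_of_abs_fst_lt hfold
  have hE0 : 0 < enorm2 (A v) :=
    (by nlinarith : 0 < (|b| - η) * X).trans_le (hm.trans (hAv ▸ norm_le_enorm2 (A v)))
  have hE : enorm2 (A v) ≤ 7 / 4 * |b| * X :=
    (enorm2_le_norm _).trans (by rw [hAv]; nlinarith)
  rw [div_lt_div_iff₀ hb0 (pow_pos hE0 3)]
  calc a * enorm2 (A v) ^ 3 ≤ 201 / 100 * (7 / 4 * |b| * X) ^ 3 := by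
        gcongr; linarith [(abs_le.1 ha).2]
    _ < 2 * |b| * X ^ 3 * |b| := by
        have hbX : 0 < |b| ^ 2 * X ^ 3 := by positivity
        nlinarith [mul_le_mul_of_nonneg_right hb hbX.le]
    _ ≤ _ := by gcongr

end Fold

/-- **Lemma (folds have large curvature).** Let `γ₀` be an admissible curve and
`γ₁ = f ∘ γ₀ = (ξ, η₁)`. If at some `t` we have `η̇₁(t) ≠ 0` and `|ξ̇(t)/η̇₁(t)| < 1`,
then `|κ₁(t)| > a/b ≫ 1`. -/
theorem curvature_at_folds :
    ∃ ε0 : ℝ, 0 < ε0 ∧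
      ∀ a b η : ℝ, |a - 2| ≤ ε0 → 0 < |b| → |b| ≤ ε0 → 0 ≤ η → η ≤ ε0 →
        4 * η * (1 + 1 / 2) < |b| →
        ∀ f : Pt → Pt, IsHenonLike f a b η →
          ∀ γ : ℝ → Pt, ContDiff ℝ 2 γ →
            (∀ s : ℝ, AlmostHorizontal (deriv γ s) ∧ curvature2 γ s < 1 / 2) →
            ∀ t : ℝ, (deriv (f ∘ γ) t).2 ≠ 0 →
              |(deriv (f ∘ γ) t).1| < |(deriv (f ∘ γ) t).2| →
              a / |b| < curvature2 (f ∘ γ) t := by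
  refine ⟨1 / 100, by norm_num, ?_⟩
  intro a b η ha hb0 hb _ _ hηb f hf γ hγ hadm t _ hfold
  have hfd : Differentiable ℝ f := hf.contDiff.differentiable two_ne_zero
  have hγd : Differentiable ℝ γ := hγ.differentiable two_ne_zero
  rw [deriv_comp_curve hfd hγd] at hfold
  rw [curvature2_eq, deriv_deriv_comp_curve hf.contDiff hγ, deriv_comp_curve hfd hγd]
  exact curvature_gt_of_fold ha hb0 hb (by linarith) (hf.norm_fderiv_sub_henonFDeriv_le _)
    (hf.norm_fderiv_fderiv_sub_henonFDeriv2_le _) (hadm t).1 (hadm t).2 hfold
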